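/- arXiv:1812.00459 — 4 statements merged into one kernel-verified Lean document; each statement's English description precedes it below -/
import Mathlib

section
/- The integral ∫₀^∞ s^{−3} (s·coth(s) + s²/(sinh(s))² − 2) ds over real s ∈ (0,∞) equals 1/3; equivalently, ζ(2) = (π²/2) · ∫₀^∞ s^{−3} (s·coth(s) + s²/(sinh(s))² − 2) ds = π²/6. -/
/-!
On `(0, ∞)` the integrand is the derivative of `G x = (1 - x coth x) / x²`. Since
`x cosh x - sinh x ~ x³ / 3` (one application of l'Hôpital's rule), `G` tends to `-1/3` at `0⁺`,
and it tends to `0` at `∞`. The integrand is nonnegative: multiplied by `x³ sinh² x` it becomes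
`(t sinh t + t² - 4 (cosh t - 1)) / 4` with `t = 2x`, and three differentiations reduce this to
`t cosh t - sinh t ≥ 0`. So the improper integral equals `G(∞) - G(0⁺) = 1/3`, and the rest is
`ζ(2) = π² / 6`.
-/

open Real MeasureTheory

noncomputable def coth (s : ℝ) : ℝ := Real.cosh s / Real.sinh s

open Set Filter Topology

lemma nonneg_of_hasDerivAt_nonneg {f f' : ℝ → ℝ} {a x : ℝ}
    (hf : ∀ y, HasDerivAt f (f' y) y) (hf' : ∀ y, a ≤ y → 0 ≤ f' y) (ha : 0 ≤ f a)
    (hx : a ≤ x) : 0 ≤ f x := by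
  have hmono : MonotoneOn f (Ici a) :=
    monotoneOn_of_hasDerivWithinAt_nonneg (convex_Ici a)
      (fun y _ => (hf y).continuousAt.continuousWithinAt) (fun y _ => (hf y).hasDerivWithinAt)
      (fun y hy => hf' y (by rw [interior_Ici] at hy; exact hy.le))
  exact ha.trans (hmono self_mem_Ici hx hx)

lemma integral_Ioi_of_hasDerivAt_of_nonneg_of_tendsto {g g' : ℝ → ℝ} {a l₀ l : ℝ}
    (hg₀ : Tendsto g (𝓝[>] a) (𝓝 l₀)) (hderiv : ∀ x ∈ Ioi a, HasDerivAt g (g' x) x)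
    (g'pos : ∀ x ∈ Ioi a, 0 ≤ g' x) (hg : Tendsto g atTop (𝓝 l)) :
    ∫ x in Ioi a, g' x = l - l₀ := by
  classical
  have hcont : ContinuousWithinAt (Function.update g a l₀) (Ici a) a := by
    rw [← continuousWithinAt_Ioi_iff_Ici, continuousWithinAt_update_same]
    simpa using hg₀
  have hderiv' : ∀ x ∈ Ioi a, HasDerivAt (Function.update g a l₀) (g' x) x := fun x hx =>
    (hderiv x hx).congr_of_eventuallyEq <| by
      filter_upwards [Ioi_mem_nhds hx] with y hy using Function.update_of_ne hy.ne' _ _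
  have hg' : Tendsto (Function.update g a l₀) atTop (𝓝 l) :=
    hg.congr' <| by
      filter_upwards [eventually_gt_atTop a] with y hy
      using (Function.update_of_ne hy.ne' _ _).symm
  simpa using integral_Ioi_of_hasDerivAt_of_nonneg hcont hderiv' g'pos hg'

lemma sinh_le_mul_cosh {x : ℝ} (hx : 0 ≤ x) : sinh x ≤ x * cosh x := by
  refine sub_nonneg.1 <| nonneg_of_hasDerivAt_nonneg (f := fun y => y * cosh y - sinh y)
    (f' := fun y => y * sinh y) (fun y => ?_) (fun y hy => mul_nonneg hy (sinh_nonneg_iff.2 hy))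
    (by simp) hx
  exact ((hasDerivAt_id' y).mul (hasDerivAt_cosh y)).sub (hasDerivAt_sinh y) |>.congr_deriv
    (by ring)

lemma two_mul_cosh_sub_one_le_mul_sinh {x : ℝ} (hx : 0 ≤ x) :
    2 * (cosh x - 1) ≤ x * sinh x := by
  refine sub_nonneg.1 <| nonneg_of_hasDerivAt_nonneg (f := fun y => y * sinh y - 2 * (cosh y - 1))
    (f' := fun y => y * cosh y - sinh y) (fun y => ?_)
    (fun y hy => sub_nonneg.2 (sinh_le_mul_cosh hy)) (by simp) hx
  exact ((hasDerivAt_id' y).mul (hasDerivAt_sinh y)).sub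
    (((hasDerivAt_cosh y).sub_const 1).const_mul 2) |>.congr_deriv (by ring)

lemma three_mul_sinh_le {x : ℝ} (hx : 0 ≤ x) : 3 * sinh x ≤ x * cosh x + 2 * x := by
  refine sub_nonneg.1 <| nonneg_of_hasDerivAt_nonneg (f := fun y => y * cosh y + 2 * y - 3 * sinh y)
    (f' := fun y => y * sinh y - 2 * (cosh y - 1)) (fun y => ?_)
    (fun y hy => sub_nonneg.2 (two_mul_cosh_sub_one_le_mul_sinh hy)) (by simp) hx
  exact (((hasDerivAt_id' y).mul (hasDerivAt_cosh y)).add ((hasDerivAt_id' y).const_mul 2)).sub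
    ((hasDerivAt_sinh y).const_mul 3) |>.congr_deriv (by ring)

lemma four_mul_cosh_sub_one_le {x : ℝ} (hx : 0 ≤ x) :
    4 * (cosh x - 1) ≤ x * sinh x + x ^ 2 := by
  refine sub_nonneg.1 <| nonneg_of_hasDerivAt_nonneg
    (f := fun y => y * sinh y + y ^ 2 - 4 * (cosh y - 1))
    (f' := fun y => y * cosh y + 2 * y - 3 * sinh y) (fun y => ?_)
    (fun y hy => sub_nonneg.2 (three_mul_sinh_le hy)) (by simp) hx
  exact (((hasDerivAt_id' y).mul (hasDerivAt_sinh y)).add (hasDerivAt_pow 2 y)).sub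
    (((hasDerivAt_cosh y).sub_const 1).const_mul 4) |>.congr_deriv (by ring)

lemma two_mul_sinh_sq_le {x : ℝ} (hx : 0 ≤ x) :
    2 * sinh x ^ 2 ≤ x * cosh x * sinh x + x ^ 2 := by
  have h := four_mul_cosh_sub_one_le (by positivity : 0 ≤ 2 * x)
  rw [sinh_two_mul, cosh_two_mul, cosh_sq] at h
  linarith

lemma hasDerivAt_coth {x : ℝ} (hx : sinh x ≠ 0) : HasDerivAt coth (-1 / sinh x ^ 2) x := by
  refine ((hasDerivAt_cosh x).div (hasDerivAt_sinh x) hx).congr_deriv ?_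
  rw [← cosh_sq_sub_sinh_sq x]; ring

lemma tendsto_sinh_div_self : Tendsto (fun x => sinh x / x) (𝓝[≠] 0) (𝓝 1) := by
  have h := hasDerivAt_iff_tendsto_slope.1 (hasDerivAt_sinh 0)
  rw [cosh_zero] at h
  exact h.congr fun x => by simp [slope_def_field]

lemma tendsto_coth_atTop : Tendsto coth atTop (𝓝 1) := by
  have hsinh : Tendsto sinh atTop atTop := by
    refine tendsto_atTop_mono' _ ?_ tendsto_id
    filter_upwards [eventually_ge_atTop 0] with x hx using self_le_sinh_iff.2 hx
  have h := (tendsto_exp_neg_atTop_nhds_zero.div_atTop hsinh).const_add (1 : ℝ)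
  rw [add_zero] at h
  refine h.congr' ?_
  filter_upwards [eventually_gt_atTop 0] with x hx
  rw [coth, ← cosh_sub_sinh]
  field_simp [(sinh_pos_iff.2 hx).ne']
  ring

lemma tendsto_mul_cosh_sub_sinh_div_cube :
    Tendsto (fun x => (x * cosh x - sinh x) / x ^ 3) (𝓝[>] 0) (𝓝 (1 / 3)) := by
  have hdiv : Tendsto (fun x => x * sinh x / (3 * x ^ 2)) (𝓝[>] 0) (𝓝 (1 / 3)) := by
    have h := (tendsto_sinh_div_self.mono_left (nhdsGT_le_nhdsNE 0)).div_const 3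
    refine h.congr' ?_
    filter_upwards [self_mem_nhdsWithin] with x (hx : 0 < x)
    field_simp
  refine HasDerivAt.lhopital_zero_nhdsGT (.of_forall fun x => ?_) (.of_forall fun x => ?_)
    (by filter_upwards [self_mem_nhdsWithin] with x (hx : 0 < x) using by positivity) ?_ ?_ hdiv
  · exact ((hasDerivAt_id' x).mul (hasDerivAt_cosh x)).sub (hasDerivAt_sinh x) |>.congr_deriv
      (by ring)
  · exact (hasDerivAt_pow 3 x).congr_deriv (by norm_num)
  · exact tendsto_nhdsWithin_of_tendsto_nhds
      ((by fun_prop : Continuous fun x => x * cosh x - sinh x).tendsto' 0 0 (by simp))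
  · exact tendsto_nhdsWithin_of_tendsto_nhds
      ((continuous_pow 3).tendsto' (0 : ℝ) 0 (by simp))

lemma tendsto_one_sub_mul_coth_div_sq_nhdsGT :
    Tendsto (fun x => (1 - x * coth x) / x ^ 2) (𝓝[>] 0) (𝓝 (-1 / 3)) := by
  have h := (tendsto_mul_cosh_sub_sinh_div_cube.neg).mul
    ((tendsto_sinh_div_self.mono_left (nhdsGT_le_nhdsNE 0)).inv₀ one_ne_zero)
  rw [show -(1 / 3 : ℝ) * 1⁻¹ = -1 / 3 by norm_num] at h
  refine h.congr' ?_
  filter_upwards [self_mem_nhdsWithin] with x (hx : 0 < x)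
  have hs := (sinh_pos_iff.2 hx).ne'
  rw [coth]
  field_simp
  ring

lemma tendsto_one_sub_mul_coth_div_sq_atTop :
    Tendsto (fun x => (1 - x * coth x) / x ^ 2) atTop (𝓝 0) := by
  have h := ((tendsto_inv_atTop_zero.pow 2).sub
    (tendsto_coth_atTop.mul (tendsto_inv_atTop_zero (𝕜 := ℝ))))
  rw [zero_pow two_ne_zero, mul_zero, sub_zero] at h
  refine h.congr' ?_
  filter_upwards [eventually_gt_atTop 0] with x hx
  field_simp

lemma hasDerivAt_one_sub_mul_coth_div_sq {x : ℝ} (hx : x ≠ 0) :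
    HasDerivAt (fun x => (1 - x * coth x) / x ^ 2)
      (x ^ (-3 : ℤ) * (x * coth x + x ^ 2 / sinh x ^ 2 - 2)) x := by
  have hs : sinh x ≠ 0 := sinh_ne_zero.2 hx
  refine (((hasDerivAt_id' x).mul (hasDerivAt_coth hs)).const_sub 1).div (hasDerivAt_pow 2 x)
    (pow_ne_zero 2 hx) |>.congr_deriv ?_
  rw [zpow_neg, zpow_ofNat, Pi.mul_apply]
  field_simp
  ring

lemma mul_coth_add_sq_div_sinh_sq_sub_two_nonneg {x : ℝ} (hx : 0 < x) :
    0 ≤ x * coth x + x ^ 2 / sinh x ^ 2 - 2 := by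
  have hs := sinh_pos_iff.2 hx
  have hcleared : x * coth x + x ^ 2 / sinh x ^ 2 - 2
      = (x * cosh x * sinh x + x ^ 2 - 2 * sinh x ^ 2) / sinh x ^ 2 := by
    rw [coth]; field_simp
  rw [hcleared]
  exact div_nonneg (sub_nonneg.2 (two_mul_sinh_sq_le hx.le)) (sq_nonneg _)

/-- `∫₀^∞ s^{-3}(s coth s + s²/(sinh s)² − 2) ds = 1/3`; equivalently
`ζ(2) = (π²/2)·∫ = π²/6`. -/
theorem zeta_two_integral :
    (∫ s in Set.Ioi (0 : ℝ), s ^ (-3 : ℤ) * (s * coth s + s ^ 2 / Real.sinh s ^ 2 - 2)) = 1 / 3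
    ∧ riemannZeta 2 = ((Real.pi : ℂ) ^ 2 / 2) *
        ((∫ s in Set.Ioi (0 : ℝ), s ^ (-3 : ℤ) * (s * coth s + s ^ 2 / Real.sinh s ^ 2 - 2) : ℝ) : ℂ)
    ∧ riemannZeta 2 = (Real.pi : ℂ) ^ 2 / 6 := by
  have hint : (∫ s in Ioi (0 : ℝ), s ^ (-3 : ℤ) * (s * coth s + s ^ 2 / sinh s ^ 2 - 2))
      = 1 / 3 := by
    rw [integral_Ioi_of_hasDerivAt_of_nonneg_of_tendsto tendsto_one_sub_mul_coth_div_sq_nhdsGT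
      (fun x hx => hasDerivAt_one_sub_mul_coth_div_sq hx.ne')
      (fun x hx => mul_nonneg (zpow_nonneg hx.le _) (mul_coth_add_sq_div_sinh_sq_sub_two_nonneg hx))
      tendsto_one_sub_mul_coth_div_sq_atTop]
    norm_num
  refine ⟨hint, ?_, riemannZeta_two⟩
  rw [hint, riemannZeta_two]
  push_cast
  ring
end

section
/- ζ(3) = −π² · ∫₀^∞ s^{−3} ( coth(s) − 1/s − s/3 ) ds, where the integral is over real s ∈ (0,∞). -/
/-!
Substituting `x = i s / π` into the Mittag-Leffler expansion of `π cot (π x)` gives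
`coth s - 1 / s = ∑ 2 s / (s² + cₙ²)` with `cₙ = (n + 1) π`; subtracting the Basel sum
`s / 3 = ∑ 2 s / cₙ²` shows that `s⁻³ (coth s - 1 / s - s / 3) = -2 ∑ 1 / (cₙ² (s² + cₙ²))`.
Each term integrates over `(0, ∞)` to `-π / cₙ³` (an arctangent), and the series converges
absolutely, so the integral is `-ζ(3) / π²`.
-/

open Real MeasureTheory

open Filter Topology Set

theorem hasSum_two_mul_div_sq_mul_pi_sq (s : ℝ) :
    HasSum (fun n : ℕ => 2 * s / ((n + 1) * π) ^ 2) (s / 3) := by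
  have basel : HasSum (fun n : ℕ => 1 / ((n : ℝ) + 1) ^ 2) (π ^ 2 / 6) := by
    simpa using (hasSum_nat_add_iff' 1).mpr hasSum_zeta_two
  rw [show s / 3 = 2 * s / π ^ 2 * (π ^ 2 / 6) by field_simp; ring]
  refine (basel.mul_left (2 * s / π ^ 2)).congr_fun fun n => ?_
  field_simp

open Complex in
theorem hasSum_coth_sub_inv {s : ℝ} (hs : s ≠ 0) :
    HasSum (fun n : ℕ => 2 * s / (s ^ 2 + ((n + 1) * π) ^ 2)) (coth s - 1 / s) := by
  set x : ℂ := s * I / π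
  have hx : x ∈ integerComplement := by
    rintro ⟨n, hn⟩
    apply hs
    simpa [x, pi_ne_zero, eq_comm] using congrArg im hn
  have hcot : π * cot (π * x) - 1 / x = (-I * π) * (coth s - 1 / s : ℝ) := by
    rw [show (π : ℂ) * x = s * I by simp only [x]; field_simp, Complex.cot_eq_cos_div_sin,
      cos_mul_I, sin_mul_I]
    simp only [coth, x, ← ofReal_cosh, ← ofReal_sinh]
    push_cast
    field_simp
    rw [I_sq]
    ring
  have hterm (n : ℕ) : cotTerm x n = (-I * π) * (2 * s / (s ^ 2 + ((n + 1) * π) ^ 2) : ℝ) := by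
    have hden : (x + (n + 1)) * (x - (n + 1)) = -(s ^ 2 + ((n + 1) * π) ^ 2) / π ^ 2 := by
      simp only [x]
      field_simp
      linear_combination (s : ℂ) ^ 2 * I_sq
    rw [cotTerm_identity hx, hden]
    simp only [x]
    push_cast
    field_simp
  have hsum := (summable_cotTerm hx).hasSum
  rw [← cot_series_rep' hx, hcot, funext hterm,
    hasSum_mul_left_iff (by simp [pi_ne_zero]), hasSum_ofReal] at hsum
  exact hsum

theorem hasSum_zpow_neg_three_mul_coth_sub {s : ℝ} (hs : s ≠ 0) :
    HasSum (fun n : ℕ => -2 * (((n + 1) * π) ^ 2 * (s ^ 2 + ((n + 1) * π) ^ 2))⁻¹)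
      (s ^ (-3 : ℤ) * (coth s - 1 / s - s / 3)) := by
  refine (((hasSum_coth_sub_inv hs).sub (hasSum_two_mul_div_sq_mul_pi_sq s)).mul_left
    (s ^ (-3 : ℤ))).congr_fun fun n => ?_
  have : ((n : ℝ) + 1) * π ≠ 0 := by positivity
  have : s ^ 2 + ((n + 1) * π) ^ 2 ≠ 0 := by positivity
  field_simp
  ring

theorem hasDerivAt_arctan_div_div {c : ℝ} (hc : c ≠ 0) (x : ℝ) :
    HasDerivAt (fun s => arctan (s / c) / c) ((x ^ 2 + c ^ 2)⁻¹) x := by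
  refine (((hasDerivAt_id x).div_const c).arctan.div_const c).congr_deriv ?_
  simp only [id]
  field_simp
  ring

theorem integrableOn_and_integral_Ioi_inv_sq_add_sq {c : ℝ} (hc : 0 < c) :
    IntegrableOn (fun s => (s ^ 2 + c ^ 2)⁻¹) (Ioi 0) ∧
      ∫ s in Ioi 0, (s ^ 2 + c ^ 2)⁻¹ = π / (2 * c) := by
  have hderiv (x : ℝ) (_ : x ∈ Ici 0) := hasDerivAt_arctan_div_div hc.ne' x
  have hnonneg (x : ℝ) (_ : x ∈ Ioi 0) : 0 ≤ (x ^ 2 + c ^ 2)⁻¹ := by positivity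
  have hlim : Tendsto (fun s => arctan (s / c) / c) atTop (𝓝 (π / 2 / c)) :=
    ((tendsto_nhds_of_tendsto_nhdsWithin tendsto_arctan_atTop).comp
      (tendsto_id.atTop_div_const hc)).div_const c
  refine ⟨integrableOn_Ioi_deriv_of_nonneg' hderiv hnonneg hlim, ?_⟩
  rw [integral_Ioi_of_hasDerivAt_of_nonneg' hderiv hnonneg hlim]
  simp only [zero_div, arctan_zero, sub_zero]
  ring

theorem integrableOn_and_integral_Ioi_inv_sq_mul_sq_add_sq {c : ℝ} (hc : 0 < c) :
    IntegrableOn (fun s => (c ^ 2 * (s ^ 2 + c ^ 2))⁻¹) (Ioi 0) ∧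
      ∫ s in Ioi 0, (c ^ 2 * (s ^ 2 + c ^ 2))⁻¹ = π / (2 * c ^ 3) := by
  obtain ⟨hint, hval⟩ := integrableOn_and_integral_Ioi_inv_sq_add_sq hc
  simp_rw [mul_inv]
  refine ⟨hint.const_mul _, ?_⟩
  rw [integral_const_mul, hval]
  field_simp

theorem integral_Ioi_zpow_neg_three_mul_coth_sub :
    ∫ s in Ioi 0, s ^ (-3 : ℤ) * (coth s - 1 / s - s / 3) =
      -(∑' n : ℕ, 1 / ((n : ℝ) + 1) ^ 3) / π ^ 2 := by
  set F : ℕ → ℝ → ℝ := fun n s => -2 * (((n + 1) * π) ^ 2 * (s ^ 2 + ((n + 1) * π) ^ 2))⁻¹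
  have hc (n : ℕ) : 0 < ((n : ℝ) + 1) * π := by positivity
  have hF (n : ℕ) : ∫ s in Ioi 0, F n s = -(1 / ((n : ℝ) + 1) ^ 3) / π ^ 2 := by
    rw [integral_const_mul, (integrableOn_and_integral_Ioi_inv_sq_mul_sq_add_sq (hc n)).2]
    field_simp
  have hFnorm (n : ℕ) : ∫ s in Ioi 0, ‖F n s‖ = 1 / ((n : ℝ) + 1) ^ 3 / π ^ 2 := by
    have h (s : ℝ) : ‖F n s‖ = -F n s := by
      rw [Real.norm_of_nonpos]
      simp only [F, neg_mul, neg_nonpos]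
      positivity
    simp_rw [h, integral_neg, hF]
    ring
  have hζ : Summable fun n : ℕ => 1 / ((n : ℝ) + 1) ^ 3 := by
    simpa using (summable_nat_add_iff 1).mpr (Real.summable_one_div_nat_pow.mpr (by norm_num))
  have hasSum_integrals := hasSum_integral_of_summable_integral_norm
    (fun n => (integrableOn_and_integral_Ioi_inv_sq_mul_sq_add_sq (hc n)).1.const_mul (-2))
    ((hζ.div_const (π ^ 2)).congr fun n => (hFnorm n).symm)
  rw [setIntegral_congr_fun measurableSet_Ioi
    fun s hs => (hasSum_zpow_neg_three_mul_coth_sub (ne_of_gt hs)).tsum_eq.symm]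
  exact hasSum_integrals.unique ((hζ.hasSum.neg.div_const (π ^ 2)).congr_fun hF)

theorem riemannZeta_natCast_eq_tsum {k : ℕ} (hk : 1 < k) :
    riemannZeta k = ((∑' n : ℕ, 1 / ((n : ℝ) + 1) ^ k : ℝ) : ℂ) := by
  rw [zeta_eq_tsum_one_div_nat_add_one_cpow (by simpa using hk), Complex.ofReal_tsum]
  push_cast
  simp [Complex.cpow_natCast]

/-- `ζ(3) = −π² ∫₀^∞ s^{-3}(coth s − 1/s − s/3) ds`. -/
theorem zeta_three_integral_coth :
    riemannZeta 3 = -(Real.pi : ℂ) ^ 2 *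
      ((∫ s in Set.Ioi (0 : ℝ), s ^ (-3 : ℤ) * (coth s - 1 / s - s / 3) : ℝ) : ℂ) := by
  rw [integral_Ioi_zpow_neg_three_mul_coth_sub, ← Nat.cast_ofNat,
    riemannZeta_natCast_eq_tsum (by norm_num)]
  push_cast
  field_simp
end

section
/- ζ(3) = −3π² · ∫₀^∞ s^{−4} ( ln(sinh(s)/s) − s²/6 ) ds, where the integral is over real s ∈ (0,∞). -/
/-!
By Euler's product `sinh s / s = ∏ₖ (1 + s² / (kπ)²)` and `ζ(2) = π² / 6`, the integrand
is `∑ₖ s⁻⁴ (log (1 + s² / c²) - s² / c²)` with `c = kπ`. Each term is nonpositive and has an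
elementary primitive, so its integral over `(0, ∞)` is `-π / (3c³)`. These integrals are
absolutely summable, so sum and integral may be exchanged, and
`∑ₖ -π / (3 (kπ)³) = -ζ(3) / (3π²)`.
-/

open Real MeasureTheory Filter Set Topology

lemma sub_log_one_add_nonneg {x : ℝ} (hx : -1 < x) : 0 ≤ x - log (1 + x) := by
  have := log_le_sub_one_of_pos (x := 1 + x) (by linarith)
  linarith

lemma sub_log_one_add_le_sq {x : ℝ} (hx : 0 ≤ x) : x - log (1 + x) ≤ x ^ 2 := by
  have h := one_sub_inv_le_log_of_pos (x := 1 + x) (by linarith)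
  have : x - (1 - (1 + x)⁻¹) = x ^ 2 / (1 + x) := by field_simp; ring
  have : x ^ 2 / (1 + x) ≤ x ^ 2 := div_le_self (by positivity) (by linarith)
  linarith

/-- Obtained by integrating by parts against `-1 / (3 s³)`; at `s = 0` the junk value `0` of the
division is also the limit. -/
noncomputable def logSqPrimitive (c s : ℝ) : ℝ :=
  (s ^ 2 / c ^ 2 - log (1 + s ^ 2 / c ^ 2)) / (3 * s ^ 3) - 2 / (3 * c ^ 3) * arctan (s / c)

noncomputable def logSqTerm (c s : ℝ) : ℝ :=
  s ^ (-4 : ℤ) * (log (1 + s ^ 2 / c ^ 2) - s ^ 2 / c ^ 2)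

section LogSqTerm

variable {c : ℝ}

lemma hasDerivAt_logSqPrimitive (hc : c ≠ 0) {s : ℝ} (hs : s ≠ 0) :
    HasDerivAt (logSqPrimitive c) (logSqTerm c s) s := by
  have hx : HasDerivAt (fun t : ℝ => t ^ 2 / c ^ 2) (2 * s / c ^ 2) s := by
    simpa using (hasDerivAt_pow 2 s).div_const (c ^ 2)
  have hlog := (hx.const_add 1).log (by positivity)
  have hcube : HasDerivAt (fun t : ℝ => 3 * t ^ 3) (3 * (3 * s ^ 2)) s := by
    simpa using (hasDerivAt_pow 3 s).const_mul 3
  have harctan := ((hasDerivAt_id s).div_const c).arctan.const_mul (2 / (3 * c ^ 3))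
  refine (((hx.sub hlog).div hcube (by positivity)).sub harctan).congr_deriv ?_
  rw [logSqTerm, zpow_neg, zpow_ofNat, id, Pi.sub_apply]
  field_simp
  ring

lemma continuousAt_logSqPrimitive_zero (hc : c ≠ 0) : ContinuousAt (logSqPrimitive c) 0 := by
  have hfrac : Tendsto (fun s : ℝ => (s ^ 2 / c ^ 2 - log (1 + s ^ 2 / c ^ 2)) / (3 * s ^ 3))
      (𝓝 0) (𝓝 0) := by
    refine squeeze_zero_norm (a := fun s => |s| / (3 * c ^ 4)) (fun s => ?_)
      ((continuous_abs.div_const _).tendsto' 0 0 (by simp))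
    have hx : 0 ≤ s ^ 2 / c ^ 2 := by positivity
    have hbound : s ^ 2 / c ^ 2 - log (1 + s ^ 2 / c ^ 2) ≤ |s| / (3 * c ^ 4) * ‖3 * s ^ 3‖ :=
      calc s ^ 2 / c ^ 2 - log (1 + s ^ 2 / c ^ 2) ≤ (s ^ 2 / c ^ 2) ^ 2 :=
            sub_log_one_add_le_sq hx
        _ = |s| / (3 * c ^ 4) * ‖3 * s ^ 3‖ := by
          rw [norm_mul, norm_pow, Real.norm_ofNat, Real.norm_eq_abs]
          field_simp
          rw [pow_abs, abs_of_nonneg (by positivity)]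
    rw [norm_div, Real.norm_of_nonneg (sub_log_one_add_nonneg (neg_one_lt_zero.trans_le hx))]
    exact div_le_of_le_mul₀ (norm_nonneg _) (by positivity) hbound
  have harctan : Tendsto (fun s : ℝ => 2 / (3 * c ^ 3) * arctan (s / c)) (𝓝 0) (𝓝 0) :=
    ((continuous_arctan.comp (continuous_id.div_const c)).const_mul _).tendsto' 0 0 (by simp)
  have hzero : logSqPrimitive c 0 = 0 := by simp [logSqPrimitive]
  have hlim := hfrac.sub harctan
  rw [sub_zero] at hlim
  rwa [ContinuousAt, hzero]

lemma tendsto_logSqPrimitive_atTop (hc : 0 < c) :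
    Tendsto (logSqPrimitive c) atTop (𝓝 (-π / (3 * c ^ 3))) := by
  have hdecay : Tendsto (fun s : ℝ => (3 * c ^ 2)⁻¹ * s⁻¹) atTop (𝓝 0) := by
    have := tendsto_inv_atTop_zero.const_mul (3 * c ^ 2)⁻¹
    rwa [mul_zero] at this
  have hfrac : Tendsto (fun s : ℝ => (s ^ 2 / c ^ 2 - log (1 + s ^ 2 / c ^ 2)) / (3 * s ^ 3))
      atTop (𝓝 0) := by
    refine squeeze_zero' ?_ ?_ hdecay
    · filter_upwards [eventually_gt_atTop 0] with s hs
      exact div_nonneg (sub_log_one_add_nonneg (neg_one_lt_zero.trans_le (by positivity)))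
        (by positivity)
    · filter_upwards [eventually_gt_atTop 0] with s hs
      calc (s ^ 2 / c ^ 2 - log (1 + s ^ 2 / c ^ 2)) / (3 * s ^ 3)
          ≤ s ^ 2 / c ^ 2 / (3 * s ^ 3) := by
            gcongr
            exact sub_le_self _ (log_nonneg (le_add_of_nonneg_right (by positivity)))
        _ = (3 * c ^ 2)⁻¹ * s⁻¹ := by field_simp
  have harctan : Tendsto (fun s : ℝ => 2 / (3 * c ^ 3) * arctan (s / c)) atTop
      (𝓝 (2 / (3 * c ^ 3) * (π / 2))) :=
    ((tendsto_arctan_atTop.mono_right nhdsWithin_le_nhds).comp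
      (tendsto_id.atTop_div_const hc)).const_mul _
  rw [show -π / (3 * c ^ 3) = 0 - 2 / (3 * c ^ 3) * (π / 2) by ring]
  exact hfrac.sub harctan

lemma logSqTerm_nonpos (c s : ℝ) : logSqTerm c s ≤ 0 :=
  mul_nonpos_of_nonneg_of_nonpos (by positivity) <| sub_nonpos.2 <| sub_nonneg.1 <|
    sub_log_one_add_nonneg (neg_one_lt_zero.trans_le (by positivity))

lemma integrableOn_logSqTerm (hc : 0 < c) : IntegrableOn (logSqTerm c) (Ioi 0) :=
  integrableOn_Ioi_deriv_of_nonpos (continuousAt_logSqPrimitive_zero hc.ne').continuousWithinAt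
    (fun _ hs => hasDerivAt_logSqPrimitive hc.ne' (ne_of_gt hs)) (fun _ _ => logSqTerm_nonpos c _)
    (tendsto_logSqPrimitive_atTop hc)

lemma integral_logSqTerm (hc : 0 < c) : ∫ s in Ioi 0, logSqTerm c s = -π / (3 * c ^ 3) := by
  rw [integral_Ioi_of_hasDerivAt_of_nonpos
    (continuousAt_logSqPrimitive_zero hc.ne').continuousWithinAt
    (fun _ hs => hasDerivAt_logSqPrimitive hc.ne' (ne_of_gt hs)) (fun _ _ => logSqTerm_nonpos c _)
    (tendsto_logSqPrimitive_atTop hc)]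
  simp [logSqPrimitive]

lemma integral_norm_logSqTerm (hc : 0 < c) : ∫ s in Ioi 0, ‖logSqTerm c s‖ = π / (3 * c ^ 3) := by
  rw [setIntegral_congr_fun measurableSet_Ioi
      (fun _ _ => Real.norm_of_nonpos (logSqTerm_nonpos c _)), integral_neg,
    integral_logSqTerm hc, neg_div, neg_neg]

end LogSqTerm

lemma tendsto_prod_one_add_sq_div_sq_mul_pi {s : ℝ} (hs : s ≠ 0) :
    Tendsto (fun n : ℕ => ∏ k ∈ Finset.range n, (1 + s ^ 2 / (((k : ℝ) + 1) * π) ^ 2)) atTop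
      (𝓝 (sinh s / s)) := by
  have h := tendsto_euler_sin_prod' (x := s / π * Complex.I) (by simp [hs, pi_ne_zero])
  have hx : (π : ℂ) * (s / π * Complex.I) = s * Complex.I := by
    field_simp [Complex.ofReal_ne_zero.2 pi_ne_zero]
  rw [hx, Complex.sin_mul_I, mul_div_mul_right _ _ Complex.I_ne_zero] at h
  rw [← Filter.tendsto_ofReal_iff]
  convert h using 2 with n
  · push_cast
    refine Finset.prod_congr rfl fun k _ => ?_
    simp only [sineTerm, mul_pow, Complex.I_sq]
    field_simp
  · norm_cast

lemma hasSum_one_div_add_one_sq :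
    HasSum (fun k : ℕ => 1 / ((k : ℝ) + 1) ^ 2) (π ^ 2 / 6) := by
  simpa using (hasSum_nat_add_iff' 1).2 hasSum_zeta_two

lemma hasSum_sq_div_sq_mul_pi (s : ℝ) :
    HasSum (fun k : ℕ => s ^ 2 / (((k : ℝ) + 1) * π) ^ 2) (s ^ 2 / 6) := by
  have hterm (k : ℕ) :
      s ^ 2 / (((k : ℝ) + 1) * π) ^ 2 = s ^ 2 / π ^ 2 * (1 / ((k : ℝ) + 1) ^ 2) := by
    field_simp
  simp_rw [hterm, show s ^ 2 / 6 = s ^ 2 / π ^ 2 * (π ^ 2 / 6) by field_simp]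
  exact hasSum_one_div_add_one_sq.mul_left _

lemma hasSum_log_one_add_sq_div_sq_mul_pi {s : ℝ} (hs : s ≠ 0) :
    HasSum (fun k : ℕ => log (1 + s ^ 2 / (((k : ℝ) + 1) * π) ^ 2)) (log (sinh s / s)) := by
  have hsum := summable_log_one_add_of_summable (hasSum_sq_div_sq_mul_pi s).summable
  have hpartial : Tendsto
      (fun n => ∑ k ∈ Finset.range n, log (1 + s ^ 2 / (((k : ℝ) + 1) * π) ^ 2))
      atTop (𝓝 (log (sinh s / s))) := by
    have hlim := ((continuousAt_log (by simp [hs])).tendsto).comp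
      (tendsto_prod_one_add_sq_div_sq_mul_pi hs)
    refine hlim.congr fun n => ?_
    exact log_prod fun k _ => by positivity
  rw [← tendsto_nhds_unique hsum.hasSum.tendsto_sum_nat hpartial]
  exact hsum.hasSum

lemma hasSum_logSqTerm {s : ℝ} (hs : s ≠ 0) :
    HasSum (fun k : ℕ => logSqTerm (((k : ℝ) + 1) * π) s)
      (s ^ (-4 : ℤ) * (log (sinh s / s) - s ^ 2 / 6)) :=
  ((hasSum_log_one_add_sq_div_sq_mul_pi hs).sub (hasSum_sq_div_sq_mul_pi s)).mul_left _

lemma riemannZeta_three_eq_tsum :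
    riemannZeta 3 = ((∑' k : ℕ, 1 / ((k : ℝ) + 1) ^ 3 : ℝ) : ℂ) := by
  rw [zeta_eq_tsum_one_div_nat_add_one_cpow (by norm_num), Complex.ofReal_tsum]
  congr 1 with k
  push_cast
  exact_mod_cast rfl

lemma integral_zpow_neg_four_mul_log_sinh_div_sub :
    ∫ s in Ioi 0, s ^ (-4 : ℤ) * (log (sinh s / s) - s ^ 2 / 6) =
      -(∑' k : ℕ, 1 / ((k : ℝ) + 1) ^ 3) / (3 * π ^ 2) := by
  have hc (k : ℕ) : 0 < ((k : ℝ) + 1) * π := by positivity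
  have hterm (k : ℕ) :
      π / (3 * (((k : ℝ) + 1) * π) ^ 3) = 1 / ((k : ℝ) + 1) ^ 3 / (3 * π ^ 2) := by
    field_simp
  have hsum : Summable fun k : ℕ => 1 / ((k : ℝ) + 1) ^ 3 := by
    exact_mod_cast (summable_nat_add_iff 1).2 (Real.summable_one_div_nat_pow.2 (by norm_num))
  calc ∫ s in Ioi 0, s ^ (-4 : ℤ) * (log (sinh s / s) - s ^ 2 / 6)
      = ∫ s in Ioi 0, ∑' k : ℕ, logSqTerm (((k : ℝ) + 1) * π) s :=
        setIntegral_congr_fun measurableSet_Ioi fun s hs => (hasSum_logSqTerm hs.ne').tsum_eq.symm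
    _ = ∑' k : ℕ, ∫ s in Ioi 0, logSqTerm (((k : ℝ) + 1) * π) s := by
        refine (integral_tsum_of_summable_integral_norm
          (fun k => integrableOn_logSqTerm (hc k)) ?_).symm
        simp_rw [integral_norm_logSqTerm (hc _), hterm]
        exact hsum.div_const _
    _ = -(∑' k : ℕ, 1 / ((k : ℝ) + 1) ^ 3) / (3 * π ^ 2) := by
        simp_rw [integral_logSqTerm (hc _), neg_div, hterm, tsum_neg, tsum_div_const]

/-- `ζ(3) = −3π² ∫₀^∞ s^{-4}(ln(sinh s / s) − s²/6) ds`. -/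
theorem zeta_three_integral_log_sinh :
    riemannZeta 3 = -3 * (Real.pi : ℂ) ^ 2 *
      ((∫ s in Set.Ioi (0 : ℝ), s ^ (-4 : ℤ) *
        (Real.log (Real.sinh s / s) - s ^ 2 / 6) : ℝ) : ℂ) := by
  rw [integral_zpow_neg_four_mul_log_sinh_div_sub, riemannZeta_three_eq_tsum]
  push_cast
  field_simp
end

section
/- ζ(5) = 5π⁴ · ∫₀^∞ s^{−6} ( ln(sinh(s)/s) − s²/6 + s⁴/180 ) ds, where the integral is over real s ∈ (0,∞). -/
/-!
By Euler's product for the sine, `log (sinh s / s) = ∑ₖ log (1 + (s / kπ)²)`. Subtracting the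
series `∑ₖ (s / kπ)² = s² / 6` and `∑ₖ (s / kπ)⁴ / 2 = s⁴ / 180` coming from `ζ(2)` and `ζ(4)` turns
the integrand into `∑ₖ s⁻⁶ R(s / kπ)` with `R t = log (1 + t²) - t² + t⁴ / 2 ≥ 0`. The substitution
`s = c t` gives `∫₀^∞ s⁻⁶ R(s / c) ds = c⁻⁵ ∫₀^∞ t⁻⁶ R t dt`, and the last integral equals `π / 5`
because `(2 / 5) arctan t - R t / (5 t⁵)` is an antiderivative. Hence the integral is
`(π / 5) ∑ₖ (kπ)⁻⁵ = ζ(5) / (5 π⁴)`.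
-/

open Real MeasureTheory Set Filter Topology

section MellinScaling

variable {E : Type*} [NormedAddCommGroup E] [NormedSpace ℝ E]

lemma zpow_smul_comp_div_eq (g : ℝ → E) (n : ℤ) {c : ℝ} (hc : c ≠ 0) (s : ℝ) :
    s ^ n • g (s / c) = c ^ n • ((s * c⁻¹) ^ n • g (s * c⁻¹)) := by
  rw [div_eq_mul_inv, smul_smul, mul_zpow, inv_zpow', zpow_neg, mul_left_comm,
    mul_inv_cancel₀ (zpow_ne_zero n hc), mul_one]

theorem integral_Ioi_zpow_smul_comp_div (g : ℝ → E) (n : ℤ) {c : ℝ} (hc : 0 < c) :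
    ∫ s in Ioi 0, s ^ n • g (s / c) = c ^ (n + 1) • ∫ t in Ioi 0, t ^ n • g t := by
  simp_rw [zpow_smul_comp_div_eq g n hc.ne']
  rw [integral_smul, integral_comp_mul_right_Ioi (fun t ↦ t ^ n • g t) 0 (inv_pos.2 hc),
    zero_mul, inv_inv, smul_smul, zpow_add_one₀ hc.ne']

theorem MeasureTheory.IntegrableOn.zpow_smul_comp_div {g : ℝ → E} {n : ℤ}
    (hg : IntegrableOn (fun t ↦ t ^ n • g t) (Ioi 0)) {c : ℝ} (hc : 0 < c) :
    IntegrableOn (fun s ↦ s ^ n • g (s / c)) (Ioi 0) := by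
  simp_rw [zpow_smul_comp_div_eq g n hc.ne']
  rw [← zero_mul c⁻¹] at hg
  exact ((integrableOn_Ioi_comp_mul_right_iff (fun t ↦ t ^ n • g t) 0 (inv_pos.2 hc)).2
    hg).smul (c ^ n)

theorem integral_Ioi_tsum_zpow_smul_comp_div [CompleteSpace E] {g : ℝ → E} {n : ℤ}
    (hg : IntegrableOn (fun t ↦ t ^ n • g t) (Ioi 0)) {c : ℕ → ℝ} (hc : ∀ k, 0 < c k)
    (hsum : Summable fun k ↦ c k ^ (n + 1)) :
    ∫ s in Ioi 0, ∑' k, s ^ n • g (s / c k) =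
      (∑' k, c k ^ (n + 1)) • ∫ t in Ioi 0, t ^ n • g t := by
  have hnorm : ∀ k, ∫ s in Ioi 0, ‖s ^ n • g (s / c k)‖ =
      c k ^ (n + 1) • ∫ t in Ioi 0, t ^ n • ‖g t‖ := by
    intro k
    rw [← integral_Ioi_zpow_smul_comp_div (fun t ↦ ‖g t‖) n (hc k)]
    refine setIntegral_congr_fun measurableSet_Ioi fun s (hs : 0 < s) ↦ ?_
    rw [norm_smul, Real.norm_of_nonneg (zpow_nonneg hs.le n), smul_eq_mul]
  rw [← integral_tsum_of_summable_integral_norm (fun k ↦ hg.zpow_smul_comp_div (hc k))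
    (by simpa only [hnorm] using hsum.smul_const _), ← hsum.tsum_smul_const]
  exact tsum_congr fun k ↦ integral_Ioi_zpow_smul_comp_div g n (hc k)

end MellinScaling

lemma monotoneOn_Ici_of_hasDerivAt_nonneg {f f' : ℝ → ℝ} {a : ℝ}
    (hf : ∀ x, HasDerivAt f (f' x) x) (hf' : ∀ x, a < x → 0 ≤ f' x) : MonotoneOn f (Ici a) := by
  refine monotoneOn_of_hasDerivWithinAt_nonneg (convex_Ici a)
    (fun x _ ↦ (hf x).continuousAt.continuousWithinAt) (fun x _ ↦ (hf x).hasDerivWithinAt) ?_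
  rw [interior_Ici]
  exact hf'

noncomputable def logOneAddSqRem (t : ℝ) : ℝ := log (1 + t ^ 2) - t ^ 2 + t ^ 4 / 2

lemma logOneAddSqRem_zero : logOneAddSqRem 0 = 0 := by simp [logOneAddSqRem]

lemma hasDerivAt_logOneAddSqRem (t : ℝ) :
    HasDerivAt logOneAddSqRem (2 * t ^ 5 / (1 + t ^ 2)) t := by
  have hpos : 0 < 1 + t ^ 2 := by positivity
  have hlog : HasDerivAt (fun t ↦ log (1 + t ^ 2)) (2 * t / (1 + t ^ 2)) t := by
    simpa using ((hasDerivAt_pow 2 t).const_add 1).log hpos.ne'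
  refine ((hlog.sub (hasDerivAt_pow 2 t)).add ((hasDerivAt_pow 4 t).div_const 2)).congr_deriv ?_
  field_simp
  ring

lemma logOneAddSqRem_nonneg {t : ℝ} (ht : 0 ≤ t) : 0 ≤ logOneAddSqRem t := by
  have hmono := monotoneOn_Ici_of_hasDerivAt_nonneg hasDerivAt_logOneAddSqRem
    fun x (hx : 0 < x) ↦ by positivity
  simpa [logOneAddSqRem_zero] using hmono self_mem_Ici ht ht

lemma logOneAddSqRem_le_pow_six {t : ℝ} (ht : 0 ≤ t) : logOneAddSqRem t ≤ t ^ 6 / 3 := by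
  have hderiv (x : ℝ) :
      HasDerivAt (fun x ↦ x ^ 6 / 3 - logOneAddSqRem x) (2 * x ^ 7 / (1 + x ^ 2)) x := by
    refine (((hasDerivAt_pow 6 x).div_const 3).sub (hasDerivAt_logOneAddSqRem x)).congr_deriv ?_
    field_simp
    ring
  have hmono := monotoneOn_Ici_of_hasDerivAt_nonneg hderiv fun x (hx : 0 < x) ↦ by positivity
  simpa [logOneAddSqRem_zero] using hmono self_mem_Ici ht ht

lemma logOneAddSqRem_le_pow_four (t : ℝ) : logOneAddSqRem t ≤ t ^ 4 / 2 := by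
  have := log_le_sub_one_of_pos (by positivity : 0 < 1 + t ^ 2)
  rw [logOneAddSqRem]
  linarith

lemma tendsto_logOneAddSqRem_div_pow_five_nhdsGT_zero :
    Tendsto (fun t ↦ logOneAddSqRem t / t ^ 5) (𝓝[>] 0) (𝓝 0) := by
  have hlin : Tendsto (fun t : ℝ ↦ t / 3) (𝓝[>] 0) (𝓝 0) := by
    simpa using ((continuous_id.div_const (3 : ℝ)).tendsto 0).mono_left nhdsWithin_le_nhds
  refine tendsto_of_tendsto_of_tendsto_of_le_of_le' tendsto_const_nhds hlin ?_ ?_ <;>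
    filter_upwards [self_mem_nhdsWithin] with t (ht : 0 < t)
  · exact div_nonneg (logOneAddSqRem_nonneg ht.le) (by positivity)
  · rw [div_le_iff₀ (by positivity)]
    linarith [logOneAddSqRem_le_pow_six ht.le]

lemma tendsto_logOneAddSqRem_div_pow_five_atTop :
    Tendsto (fun t ↦ logOneAddSqRem t / t ^ 5) atTop (𝓝 0) := by
  have hinv : Tendsto (fun t : ℝ ↦ t⁻¹ / 2) atTop (𝓝 0) := by
    simpa using tendsto_inv_atTop_zero.div_const (2 : ℝ)
  refine tendsto_of_tendsto_of_tendsto_of_le_of_le' tendsto_const_nhds hinv ?_ ?_ <;>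
    filter_upwards [eventually_gt_atTop 0] with t ht
  · exact div_nonneg (logOneAddSqRem_nonneg ht.le) (by positivity)
  · rw [div_le_iff₀ (by positivity)]
    have h := logOneAddSqRem_le_pow_four t
    field_simp
    linarith

noncomputable def logOneAddSqRemPrimitive (t : ℝ) : ℝ :=
  2 / 5 * arctan t - logOneAddSqRem t / t ^ 5 / 5

lemma hasDerivAt_logOneAddSqRemPrimitive {t : ℝ} (ht : 0 < t) :
    HasDerivAt logOneAddSqRemPrimitive (t ^ (-6 : ℤ) * logOneAddSqRem t) t := by
  have hquot := (hasDerivAt_logOneAddSqRem t).div (hasDerivAt_pow 5 t) (by positivity)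
  refine (((hasDerivAt_arctan t).const_mul (2 / 5)).sub (hquot.div_const 5)).congr_deriv ?_
  rw [zpow_neg, zpow_ofNat]
  field_simp
  ring

lemma continuousWithinAt_logOneAddSqRemPrimitive_zero :
    ContinuousWithinAt logOneAddSqRemPrimitive (Ici 0) 0 := by
  have h0 : logOneAddSqRemPrimitive 0 = 0 := by
    simp [logOneAddSqRemPrimitive, logOneAddSqRem_zero]
  rw [← continuousWithinAt_Ioi_iff_Ici, ContinuousWithinAt, h0]
  have harctan : Tendsto arctan (𝓝[>] 0) (𝓝 0) := by
    simpa using (continuous_arctan.tendsto 0).mono_left nhdsWithin_le_nhds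
  unfold logOneAddSqRemPrimitive
  simpa only [mul_zero, zero_div, sub_zero] using
    (harctan.const_mul (2 / 5)).sub (tendsto_logOneAddSqRem_div_pow_five_nhdsGT_zero.div_const 5)

lemma tendsto_logOneAddSqRemPrimitive_atTop :
    Tendsto logOneAddSqRemPrimitive atTop (𝓝 (π / 5)) := by
  have harctan := (tendsto_nhds_of_tendsto_nhdsWithin tendsto_arctan_atTop).const_mul (2 / 5 : ℝ)
  unfold logOneAddSqRemPrimitive
  convert harctan.sub (tendsto_logOneAddSqRem_div_pow_five_atTop.div_const 5) using 2
  ring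

theorem integrableOn_zpow_neg_six_mul_logOneAddSqRem :
    IntegrableOn (fun t ↦ t ^ (-6 : ℤ) * logOneAddSqRem t) (Ioi 0) :=
  integrableOn_Ioi_deriv_of_nonneg continuousWithinAt_logOneAddSqRemPrimitive_zero
    (fun _ ht ↦ hasDerivAt_logOneAddSqRemPrimitive ht)
    (fun t (ht : 0 < t) ↦ mul_nonneg (zpow_nonneg ht.le _) (logOneAddSqRem_nonneg ht.le))
    tendsto_logOneAddSqRemPrimitive_atTop

theorem integral_zpow_neg_six_mul_logOneAddSqRem :
    ∫ t in Ioi 0, t ^ (-6 : ℤ) * logOneAddSqRem t = π / 5 := by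
  rw [integral_Ioi_of_hasDerivAt_of_nonneg continuousWithinAt_logOneAddSqRemPrimitive_zero
    (fun _ ht ↦ hasDerivAt_logOneAddSqRemPrimitive ht)
    (fun t (ht : 0 < t) ↦ mul_nonneg (zpow_nonneg ht.le _) (logOneAddSqRem_nonneg ht.le))
    tendsto_logOneAddSqRemPrimitive_atTop]
  simp [logOneAddSqRemPrimitive, logOneAddSqRem_zero]

lemma tendsto_prod_one_add_sq_div_atTop {s : ℝ} (hs : s ≠ 0) :
    Tendsto (fun n ↦ ∏ k ∈ Finset.range n, (1 + (s / ((k + 1) * π)) ^ 2)) atTop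
      (𝓝 (sinh s / s)) := by
  have hπ : (π : ℂ) ≠ 0 := Complex.ofReal_ne_zero.2 pi_ne_zero
  have hx : (s : ℂ) * Complex.I / π ≠ 0 := by simp [hs, pi_ne_zero]
  have hfactor (k : ℕ) :
      1 + sineTerm (s * Complex.I / π) k = ((1 + (s / ((k + 1) * π)) ^ 2 : ℝ) : ℂ) := by
    push_cast
    field_simp
    rw [Complex.I_sq]
    ring
  have hlimit : Complex.sin (π * (s * Complex.I / π)) / (π * (s * Complex.I / π)) =
      ((sinh s / s : ℝ) : ℂ) := by
    rw [mul_div_cancel₀ _ hπ, Complex.sin_mul_I]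
    push_cast
    field_simp [Complex.I_ne_zero]
  have h := tendsto_euler_sin_prod' hx
  simp_rw [hfactor, ← Complex.ofReal_prod, hlimit] at h
  exact tendsto_ofReal_iff.1 h

theorem hasSum_log_one_add_sq_div {s : ℝ} (hs : s ≠ 0) :
    HasSum (fun k : ℕ ↦ log (1 + (s / ((k + 1) * π)) ^ 2)) (log (sinh s / s)) := by
  have hone (k : ℕ) : 1 ≤ 1 + (s / ((k + 1) * π)) ^ 2 := le_add_of_nonneg_right (sq_nonneg _)
  rw [hasSum_iff_tendsto_nat_of_nonneg fun k ↦ log_nonneg (hone k)]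
  have hquot : sinh s / s ≠ 0 := div_ne_zero (sinh_ne_zero.2 hs) hs
  convert (continuousAt_log hquot).tendsto.comp (tendsto_prod_one_add_sq_div_atTop hs) with n
  exact (log_prod fun k _ ↦ (zero_lt_one.trans_le (hone k)).ne').symm

lemma hasSum_div_nat_add_one_mul_pi_pow {p : ℕ} {ζp : ℝ} (hp : p ≠ 0)
    (h : HasSum (fun n : ℕ ↦ 1 / (n : ℝ) ^ p) ζp) (s : ℝ) :
    HasSum (fun k : ℕ ↦ (s / ((k + 1) * π)) ^ p) (s ^ p / π ^ p * ζp) := by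
  -- the `n = 0` term of `h` is `1 / 0 ^ p = 0`
  have hshift : HasSum (fun k : ℕ ↦ 1 / ((k : ℝ) + 1) ^ p) ζp := by
    simpa [hp] using (hasSum_nat_add_iff' 1).2 h
  have hterm : (fun k : ℕ ↦ (s / ((k + 1) * π)) ^ p) =
      fun k : ℕ ↦ s ^ p / π ^ p * (1 / ((k : ℝ) + 1) ^ p) := by
    ext k
    rw [div_pow, mul_pow]
    field_simp
  rw [hterm]
  exact hshift.mul_left _

theorem hasSum_logOneAddSqRem_div {s : ℝ} (hs : s ≠ 0) :
    HasSum (fun k : ℕ ↦ logOneAddSqRem (s / ((k + 1) * π)))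
      (log (sinh s / s) - s ^ 2 / 6 + s ^ 4 / 180) := by
  have h2 := hasSum_div_nat_add_one_mul_pi_pow two_ne_zero hasSum_zeta_two s
  have h4 := (hasSum_div_nat_add_one_mul_pi_pow four_ne_zero hasSum_zeta_four s).div_const 2
  have hsum := ((hasSum_log_one_add_sq_div hs).sub h2).add h4
  have hvalue : log (sinh s / s) - s ^ 2 / π ^ 2 * (π ^ 2 / 6) + s ^ 4 / π ^ 4 * (π ^ 4 / 90) / 2 =
      log (sinh s / s) - s ^ 2 / 6 + s ^ 4 / 180 := by
    field_simp
    ring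
  rw [hvalue] at hsum
  exact hsum

lemma summable_nat_add_one_zpow_neg {p : ℕ} (hp : 1 < p) :
    Summable fun n : ℕ ↦ ((n : ℝ) + 1) ^ (-(p : ℤ)) := by
  simpa [zpow_neg] using (summable_nat_add_iff 1).2 (Real.summable_nat_pow_inv.2 hp)

lemma riemannZeta_natCast_eq_tsum_zpow {p : ℕ} (hp : 1 < p) :
    riemannZeta p = ((∑' n : ℕ, ((n : ℝ) + 1) ^ (-(p : ℤ)) : ℝ) : ℂ) := by
  rw [zeta_eq_tsum_one_div_nat_add_one_cpow (by simpa using hp), Complex.ofReal_tsum]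
  refine tsum_congr fun n ↦ ?_
  simp [zpow_neg]

theorem integral_zpow_neg_six_mul_log_sinh_div :
    ∫ s in Ioi (0 : ℝ), s ^ (-6 : ℤ) * (log (sinh s / s) - s ^ 2 / 6 + s ^ 4 / 180) =
      π ^ (-4 : ℤ) / 5 * ∑' n : ℕ, ((n : ℝ) + 1) ^ (-5 : ℤ) := by
  have hscale (k : ℕ) : 0 < ((k : ℝ) + 1) * π := by positivity
  have hsum : Summable fun k : ℕ ↦ (((k : ℝ) + 1) * π) ^ (-6 + 1 : ℤ) := by
    simpa [mul_pow, mul_inv] using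
      (summable_nat_add_one_zpow_neg (p := 5) (by norm_num)).mul_left (π ^ (-5 : ℤ))
  have hint := integral_Ioi_tsum_zpow_smul_comp_div integrableOn_zpow_neg_six_mul_logOneAddSqRem
    hscale hsum
  simp only [smul_eq_mul, integral_zpow_neg_six_mul_logOneAddSqRem] at hint
  rw [setIntegral_congr_fun measurableSet_Ioi fun s (hs : 0 < s) ↦
    ((hasSum_logOneAddSqRem_div hs.ne').mul_left (s ^ (-6 : ℤ))).tsum_eq.symm, hint]
  have hpi : π ^ (-4 : ℤ) = π ^ (-5 : ℤ) * π := by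
    rw [← zpow_add_one₀ pi_ne_zero]
    norm_num
  simp_rw [show (-6 + 1 : ℤ) = -5 by norm_num, mul_zpow]
  rw [tsum_mul_right, hpi]
  ring

/-- `ζ(5) = 5π⁴ ∫₀^∞ s^{-6}(ln(sinh s / s) − s²/6 + s⁴/180) ds`. -/
theorem zeta_five_integral_log_sinh :
    riemannZeta 5 = 5 * (Real.pi : ℂ) ^ 4 *
      ((∫ s in Set.Ioi (0 : ℝ), s ^ (-6 : ℤ) *
        (Real.log (Real.sinh s / s) - s ^ 2 / 6 + s ^ 4 / 180) : ℝ) : ℂ) := by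
  have hζ := riemannZeta_natCast_eq_tsum_zpow (p := 5) (by norm_num)
  rw [Nat.cast_ofNat] at hζ
  rw [hζ, integral_zpow_neg_six_mul_log_sinh_div]
  push_cast
  rw [zpow_neg, zpow_ofNat]
  field_simp
end
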